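/- For every n ≥ 4, any two disjoint edges e₁, e₂ of Q_n, and any two vertices u, v of Q_n with opposite parities and uv ∉ {e₁, e₂}, there exists a Hamiltonian path in Q_n joining u and v that contains both e₁ and e₂. -/

import Mathlib

open SimpleGraph Finset

def cube (n : ℕ) : SimpleGraph (Fin n → ZMod 2) where
  Adj x y := hammingDist x y = 1
  symm := ⟨by intro x y h; rwa [hammingDist_comm]⟩
  loopless := ⟨by intro x h; simp [hammingDist_self] at h⟩

def parity {n : ℕ} (u : Fin n → ZMod 2) : ZMod 2 := ∑ i, u i

/-!
Fixing a coordinate `d` splits `Q_{m+1}` into two layers, copies of `Q_m`, joined by the perfect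
matching `x ↦ x + e_d`. Hamiltonian paths of the layers glue along this matching in two ways:
if `u` and `v` lie in the same layer, take a Hamiltonian `u`–`v` path there and replace one of
its edges `xy` by the detour `x → x' ⇝ y' → y` through a Hamiltonian `x'`–`y'` path of the other
layer; if they lie in different layers, join a path `u ⇝ w` in one layer to a path `w' ⇝ v` in
the other, for a neighbour `w` of `u`.

By induction from the 4-cycle `Q_2`, this gives a Hamiltonian `u`–`v` path through any prescribed
edge other than `uv`: choose `d` different from the direction of that edge, so that it lies in
one layer. Two disjoint edges are separated by a coordinate `d` that is the direction of neither,
so each layer receives exactly one of them and the one-edge statement applies in both. The edge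
`xy` of the detour has to avoid two prescribed edges, and a path in `Q_m` has `2^m - 1 ≥ 3` edges;
the neighbour `w` has to avoid two of them as well, which `m = n - 1 ≥ 3` directions allow.
-/

namespace SimpleGraph

variable {α β : Type*} {G : SimpleGraph α} {H : SimpleGraph β}

def HasHamPathThrough [DecidableEq α] (G : SimpleGraph α) (S : Finset (Sym2 α)) (u v : α) :
    Prop :=
  ∃ p : G.Walk u v, p.IsHamiltonian ∧ ∀ e ∈ S, e ∈ p.edges

theorem HasHamPathThrough.mono [DecidableEq α] {S T : Finset (Sym2 α)} {u v : α}
    (h : G.HasHamPathThrough S u v) (hTS : T ⊆ S) : G.HasHamPathThrough T u v :=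
  let ⟨p, hp, hS⟩ := h
  ⟨p, hp, fun e he => hS e (hTS he)⟩

theorem Walk.exists_eq_append_cons_of_mem_edges {u v : α} {e : Sym2 α} (p : G.Walk u v)
    (he : e ∈ p.edges) :
    ∃ (x y : α) (h : G.Adj x y) (q : G.Walk u x) (r : G.Walk y v),
      p = q.append (cons h r) ∧ e = s(x, y) := by
  induction p with
  | nil => simp at he
  | @cons u w v h p ih =>
    rcases List.mem_cons.1 (edges_cons h p ▸ he) with rfl | he
    · exact ⟨u, w, h, nil, p, rfl, rfl⟩
    · obtain ⟨x, y, hxy, q, r, rfl, rfl⟩ := ih he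
      exact ⟨x, y, hxy, cons h q, r, rfl, rfl⟩

/-- `H` contains the prism `G □ K₂`, with layers `f` and `g`, as a spanning subgraph. -/
structure IsPrism (f g : G →g H) : Prop where
  injective_left : Function.Injective f
  injective_right : Function.Injective g
  ne : ∀ x y, f x ≠ g y
  cover : ∀ z, (∃ x, f x = z) ∨ ∃ x, g x = z
  adj : ∀ x, H.Adj (f x) (g x)

namespace IsPrism

variable [DecidableEq α] [DecidableEq β] {f g : G →g H}

theorem count_map_add_count_map (hfg : IsPrism f g) {L₁ L₂ : List α}
    (h₁ : ∀ x, L₁.count x = 1) (h₂ : ∀ x, L₂.count x = 1) (z : β) :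
    (L₁.map f).count z + (L₂.map g).count z = 1 := by
  rcases hfg.cover z with ⟨x, rfl⟩ | ⟨x, rfl⟩
  · rw [List.count_map_of_injective _ _ hfg.injective_left, h₁,
      List.count_eq_zero.2 fun hx => ?_]
    obtain ⟨y, -, hy⟩ := List.mem_map.1 hx
    exact hfg.ne x y hy.symm
  · rw [List.count_map_of_injective _ _ hfg.injective_right, h₂,
      List.count_eq_zero.2 fun hx => ?_]
    obtain ⟨y, -, hy⟩ := List.mem_map.1 hx
    exact hfg.ne y x hy

theorem hasHamPathThrough_cross (hfg : IsPrism f g) {S T : Finset (Sym2 α)} {u x v : α}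
    (hp : G.HasHamPathThrough S u x) (hq : G.HasHamPathThrough T x v) :
    H.HasHamPathThrough (S.image (Sym2.map f) ∪ T.image (Sym2.map g)) (f u) (g v) := by
  obtain ⟨p, hp, hpS⟩ := hp
  obtain ⟨q, hq, hqT⟩ := hq
  refine ⟨(p.map f).append (.cons (hfg.adj x) (q.map g)), fun z => ?_, ?_⟩
  · simpa [Walk.support_append, Walk.support_map] using
      hfg.count_map_add_count_map hp hq z
  · simp only [mem_union, mem_image]
    rintro _ (⟨e, he, rfl⟩ | ⟨e, he, rfl⟩)
    · simp [Walk.edges_append, Walk.edges_map, List.mem_map_of_mem, hpS e he]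
    · simp [Walk.edges_append, Walk.edges_map, List.mem_map_of_mem, hqT e he]

theorem hasHamPathThrough_detour (hfg : IsPrism f g) {S T : Finset (Sym2 α)} {u x y v : α}
    {h : G.Adj x y} {q : G.Walk u x} {r : G.Walk y v}
    (hp : (q.append (.cons h r)).IsHamiltonian)
    (hpS : ∀ e ∈ S, e ∈ (q.append (.cons h r)).edges)
    (hxy : s(x, y) ∉ S) (ht : G.HasHamPathThrough T x y) :
    H.HasHamPathThrough (S.image (Sym2.map f) ∪ T.image (Sym2.map g)) (f u) (f v) := by
  obtain ⟨t, ht, htT⟩ := ht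
  refine ⟨(q.map f).append (.cons (hfg.adj x)
    ((t.map g).append (.cons (hfg.adj y).symm (r.map f)))), fun z => ?_, ?_⟩
  · have hqr : ∀ a, (q.support ++ r.support).count a = 1 := by
      simpa [Walk.IsHamiltonian, Walk.support_append] using hp
    have := hfg.count_map_add_count_map hqr ht z
    simp only [Walk.support_append, Walk.support_cons, Walk.support_map, List.tail_cons,
      List.count_append, List.map_append] at this ⊢
    omega
  · simp only [mem_union, mem_image]
    rintro _ (⟨e, he, rfl⟩ | ⟨e, he, rfl⟩)
    · have hpe := hpS e he
      simp only [Walk.edges_append, Walk.edges_cons, List.mem_append, List.mem_cons] at hpe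
      rcases hpe with hpe | rfl | hpe
      · simp [Walk.edges_append, Walk.edges_map, List.mem_map_of_mem, hpe]
      · exact absurd he hxy
      · simp [Walk.edges_append, Walk.edges_map, List.mem_map_of_mem, hpe]
    · simp [Walk.edges_append, Walk.edges_map, List.mem_map_of_mem, htT e he]

end IsPrism

end SimpleGraph

theorem exists_sym2_notMem_of_card_lt {ι α : Type*} [Fintype ι] {g : ι → α}
    (hg : Function.Injective g) (a c : α) {S T : Finset (Sym2 α)}
    (hST : #S + #T < Fintype.card ι) : ∃ i, s(a, g i) ∉ S ∧ s(g i, c) ∉ T := by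
  classical
  have hS : #(univ.filter fun i => s(a, g i) ∈ S) ≤ #S :=
    card_le_card_of_injOn (fun i => s(a, g i)) (by simp [Set.MapsTo])
      fun i _ j _ h => hg (Sym2.congr_right.1 h)
  have hT : #(univ.filter fun i => s(g i, c) ∈ T) ≤ #T :=
    card_le_card_of_injOn (fun i => s(g i, c)) (by simp [Set.MapsTo])
      fun i _ j _ h => hg (Sym2.congr_left.1 h)
  obtain ⟨i, -, hi⟩ := exists_mem_notMem_of_card_lt_card
    (s := (univ.filter fun i => s(a, g i) ∈ S) ∪ univ.filter fun i => s(g i, c) ∈ T)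
    (t := univ) ((card_union_le _ _).trans_lt (by rw [card_univ]; omega))
  simp only [mem_union, mem_filter, mem_univ, true_and, not_or] at hi
  exact ⟨i, hi⟩

theorem hammingDist_insertNth {n : ℕ} {γ : Type*} [DecidableEq γ] (d : Fin (n + 1)) (b c : γ)
    (x y : Fin n → γ) :
    hammingDist (d.insertNth b x : Fin (n + 1) → γ) (d.insertNth c y) =
      (if b = c then 0 else 1) + hammingDist x y := by
  simp only [hammingDist, card_filter, Fin.sum_univ_succAbove _ d,
    Fin.insertNth_apply_same, Fin.insertNth_apply_succAbove]
  split_ifs <;> simp_all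

theorem zmod_two_eq_of_ne_of_ne {a b c : ZMod 2} (hab : a ≠ b) (hcb : c ≠ b) : a = c := by
  revert a b c; decide

namespace cube

variable {n : ℕ}

theorem adj_iff {x y : Fin n → ZMod 2} : (cube n).Adj x y ↔ ∃ i, y = x + Pi.single i 1 := by
  have key : ∀ (a b : ZMod 2) (P : Prop) [Decidable P],
      b = a + (if P then 1 else 0) ↔ (a ≠ b ↔ P) := by
    intro a b P _; by_cases P <;> simp_all <;> revert a b <;> decide
  change #(univ.filter fun i => x i ≠ y i) = 1 ↔ _
  simp only [card_eq_one, Finset.ext_iff, mem_filter, mem_univ, true_and, mem_singleton,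
    funext_iff, Pi.add_apply, Pi.single_apply, key]

theorem adj_add_single (x : Fin n → ZMod 2) (i : Fin n) : (cube n).Adj x (x + Pi.single i 1) :=
  adj_iff.2 ⟨i, rfl⟩

theorem parity_add_single (x : Fin n → ZMod 2) (i : Fin n) :
    parity (x + Pi.single i 1) = parity x + 1 := by
  simp [parity, sum_add_distrib]

theorem parity_ne_of_adj {x y : Fin n → ZMod 2} (h : (cube n).Adj x y) :
    parity x ≠ parity y := by
  obtain ⟨i, rfl⟩ := adj_iff.1 h
  rw [parity_add_single]
  generalize parity x = p
  revert p; decide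

theorem exists_eq_of_mem_edgeSet {e : Sym2 (Fin n → ZMod 2)} (he : e ∈ (cube n).edgeSet) :
    ∃ a i, e = s(a, a + Pi.single i 1) := by
  induction e using Sym2.ind with
  | h x y =>
    obtain ⟨i, rfl⟩ := adj_iff.1 ((cube n).mem_edgeSet.1 he)
    exact ⟨x, i, rfl⟩

theorem apply_eq_of_mem_edge {a z : Fin n → ZMod 2} {i d : Fin n}
    (hz : z ∈ s(a, a + Pi.single i 1)) (hd : d ≠ i) : z d = a d := by
  rcases Sym2.mem_iff.1 hz with rfl | rfl
  · rfl
  · simp [Pi.single_eq_of_ne hd]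

def layer (d : Fin (n + 1)) (b : ZMod 2) : cube n →g cube (n + 1) where
  toFun := Fin.insertNth (α := fun _ => ZMod 2) d b
  map_rel' h := by
    change hammingDist (d.insertNth b _ : Fin (n + 1) → ZMod 2) (d.insertNth b _) = 1
    rw [hammingDist_insertNth, if_pos rfl, zero_add]
    exact h

theorem layer_apply (d : Fin (n + 1)) (b : ZMod 2) (x : Fin n → ZMod 2) :
    layer d b x = Fin.insertNth (α := fun _ => ZMod 2) d b x := rfl

theorem layer_apply_same (d : Fin (n + 1)) (b : ZMod 2) (x : Fin n → ZMod 2) :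
    layer d b x d = b :=
  Fin.insertNth_apply_same (α := fun _ => ZMod 2) d b x

theorem parity_layer (d : Fin (n + 1)) (b : ZMod 2) (x : Fin n → ZMod 2) :
    parity (layer d b x) = b + parity x := by
  simp [layer_apply, parity, Fin.sum_univ_succAbove _ d]

theorem layer_injective (d : Fin (n + 1)) (b : ZMod 2) : Function.Injective (layer d b) :=
  fun _ _ h => (Fin.insertNth_injective2 (α := fun _ => ZMod 2) h).2

theorem adj_layer_iff (d : Fin (n + 1)) (b b' : ZMod 2) {x y : Fin n → ZMod 2} :
    (cube (n + 1)).Adj (layer d b x) (layer d b' y) ↔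
      b = b' ∧ (cube n).Adj x y ∨ b ≠ b' ∧ x = y := by
  change hammingDist _ _ = 1 ↔ _
  rw [layer_apply, layer_apply, hammingDist_insertNth]
  split_ifs <;> simp_all [cube]

theorem exists_layer_eq (d : Fin (n + 1)) (z : Fin (n + 1) → ZMod 2) :
    ∃ b x, layer d b x = z :=
  ⟨z d, d.removeNth z, Fin.insertNth_self_removeNth (α := fun _ => ZMod 2) d z⟩

theorem isPrism_layer (d : Fin (n + 1)) {b b' : ZMod 2} (hb : b ≠ b') :
    IsPrism (layer d b) (layer d b') where
  injective_left := layer_injective d b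
  injective_right := layer_injective d b'
  ne x y h := hb (by simpa only [layer_apply_same] using congrFun h d)
  cover z := by
    obtain ⟨c, x, rfl⟩ := exists_layer_eq d z
    rcases eq_or_ne c b with rfl | hc
    · exact .inl ⟨x, rfl⟩
    · obtain rfl := zmod_two_eq_of_ne_of_ne hc hb.symm
      exact .inr ⟨x, rfl⟩
  adj x := (adj_layer_iff d b b').2 (.inr ⟨hb, rfl⟩)

theorem exists_eq_map_layer {d : Fin (n + 1)} {b : ZMod 2} {e : Sym2 (Fin (n + 1) → ZMod 2)}
    (he : e ∈ (cube (n + 1)).edgeSet) (hside : ∀ z ∈ e, z d = b) :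
    ∃ e' ∈ (cube n).edgeSet, e = Sym2.map (layer d b) e' := by
  induction e using Sym2.ind with
  | h x y =>
    obtain ⟨c, x, rfl⟩ := exists_layer_eq d x
    obtain ⟨c', y, rfl⟩ := exists_layer_eq d y
    obtain rfl : c = b := by simpa [layer_apply_same] using hside _ (Sym2.mem_mk_left _ _)
    obtain rfl : c' = c := by simpa [layer_apply_same] using hside _ (Sym2.mem_mk_right _ _)
    refine ⟨s(x, y), ?_, by simp⟩
    simpa [adj_layer_iff] using he

theorem exists_mem_edge_apply_eq (a : Fin n → ZMod 2) (i : Fin n) (c : ZMod 2) :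
    ∃ y ∈ s(a, a + Pi.single i 1), y i = c ∧ ∀ j ≠ i, y j = a j := by
  by_cases h : a i = c
  · exact ⟨a, Sym2.mem_mk_left _ _, h, fun _ _ => rfl⟩
  · refine ⟨a + Pi.single i 1, Sym2.mem_mk_right _ _, ?_, fun j hj => by simp [hj]⟩
    have flip : ∀ x y : ZMod 2, x ≠ y → x + 1 = y := by decide
    simpa using flip _ _ h

theorem exists_separating_coord {a₁ a₂ : Fin n → ZMod 2} {j₁ j₂ : Fin n}
    (hdisj : ∀ z ∈ s(a₁, a₁ + Pi.single j₁ 1), z ∉ s(a₂, a₂ + Pi.single j₂ 1)) :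
    ∃ d, d ≠ j₁ ∧ d ≠ j₂ ∧ a₁ d ≠ a₂ d := by
  by_contra! hagree
  -- otherwise the two edges share the vertex `y₁ = y₂`
  obtain ⟨y₁, hy₁, hy₁j, hy₁a⟩ := exists_mem_edge_apply_eq a₁ j₁ (a₂ j₁)
  obtain ⟨y₂, hy₂, hy₂j, hy₂a⟩ := exists_mem_edge_apply_eq a₂ j₂ (y₁ j₂)
  suffices y₂ = y₁ from hdisj y₁ hy₁ (this ▸ hy₂)
  funext d
  by_cases hd₂ : d = j₂
  · exact hd₂ ▸ hy₂j
  by_cases hd₁ : d = j₁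
  · rw [hy₂a d hd₂, hd₁, hy₁j]
  · rw [hy₂a d hd₂, hy₁a d hd₁, hagree d hd₁ hd₂]

theorem exists_opposite_layers_of_disjoint {e₁ e₂ : Sym2 (Fin (n + 1) → ZMod 2)}
    (he₁ : e₁ ∈ (cube (n + 1)).edgeSet) (he₂ : e₂ ∈ (cube (n + 1)).edgeSet)
    (hdisj : ∀ z ∈ e₁, z ∉ e₂) :
    ∃ (d : Fin (n + 1)) (b₁ b₂ : ZMod 2) (f₁ f₂ : Sym2 (Fin n → ZMod 2)), b₁ ≠ b₂ ∧
      f₁ ∈ (cube n).edgeSet ∧ f₂ ∈ (cube n).edgeSet ∧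
      e₁ = Sym2.map (layer d b₁) f₁ ∧ e₂ = Sym2.map (layer d b₂) f₂ := by
  obtain ⟨a₁, j₁, rfl⟩ := exists_eq_of_mem_edgeSet he₁
  obtain ⟨a₂, j₂, rfl⟩ := exists_eq_of_mem_edgeSet he₂
  obtain ⟨d, hd₁, hd₂, hb⟩ := exists_separating_coord hdisj
  obtain ⟨f₁, hf₁, hf₁e⟩ := exists_eq_map_layer he₁ fun z hz => apply_eq_of_mem_edge hz hd₁
  obtain ⟨f₂, hf₂, hf₂e⟩ := exists_eq_map_layer he₂ fun z hz => apply_eq_of_mem_edge hz hd₂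
  exact ⟨d, _, _, f₁, f₂, hb, hf₁, hf₂, hf₁e, hf₂e⟩

def PrescribedEdgeLaceable (m : ℕ) : Prop :=
  ∀ S : Finset (Sym2 (Fin m → ZMod 2)), ↑S ⊆ (cube m).edgeSet → #S ≤ 1 →
    ∀ u v, parity u ≠ parity v → s(u, v) ∉ S → (cube m).HasHamPathThrough S u v

section Step

variable {m : ℕ} {b b' : ZMod 2} {S T : Finset (Sym2 (Fin m → ZMod 2))}

theorem hasHamPathThrough_same_layer (hm : 2 ≤ m) (hlace : PrescribedEdgeLaceable m)
    (d : Fin (m + 1)) (hb : b ≠ b') (hS : ↑S ⊆ (cube m).edgeSet)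
    (hT : ↑T ⊆ (cube m).edgeSet) (hS1 : #S ≤ 1) (hT1 : #T ≤ 1) {u v : Fin m → ZMod 2}
    (hp : parity u ≠ parity v) (huv : s(u, v) ∉ S) :
    (cube (m + 1)).HasHamPathThrough
      (S.image (Sym2.map (layer d b)) ∪ T.image (Sym2.map (layer d b'))) (layer d b u)
      (layer d b v) := by
  obtain ⟨p, hp, hpS⟩ := hlace S hS hS1 u v hp huv
  have hlen : #(S ∪ T) < #p.edges.toFinset := by
    have : 4 ≤ 2 ^ m := by
      simpa using Nat.pow_le_pow_right (show 0 < 2 by norm_num) hm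
    rw [List.toFinset_card_of_nodup hp.isPath.edges_nodup, Walk.length_edges, hp.length_eq]
    simp only [Fintype.card_pi, Fintype.card_fin, ZMod.card, prod_const, card_univ]
    have := card_union_le S T
    omega
  obtain ⟨f, hf, hfST⟩ := exists_mem_notMem_of_card_lt_card hlen
  obtain ⟨x, y, hxy, q, r, rfl, rfl⟩ :=
    p.exists_eq_append_cons_of_mem_edges (List.mem_toFinset.1 hf)
  rw [mem_union, not_or] at hfST
  exact (isPrism_layer d hb).hasHamPathThrough_detour hp hpS hfST.1
    (hlace T hT hT1 x y (parity_ne_of_adj hxy) hfST.2)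

theorem hasHamPathThrough_cross_layer (hlace : PrescribedEdgeLaceable m) (d : Fin (m + 1))
    (hb : b ≠ b') (hS : ↑S ⊆ (cube m).edgeSet) (hT : ↑T ⊆ (cube m).edgeSet)
    (hS1 : #S ≤ 1) (hT1 : #T ≤ 1) (hST : #S + #T < m) {u v : Fin m → ZMod 2}
    (hp : parity u = parity v) :
    (cube (m + 1)).HasHamPathThrough
      (S.image (Sym2.map (layer d b)) ∪ T.image (Sym2.map (layer d b'))) (layer d b u)
      (layer d b' v) := by
  have hinj : Function.Injective fun i : Fin m => u + Pi.single i 1 := fun i j h => by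
    by_contra hij
    simpa [Pi.single_apply, Ne.symm hij] using congrFun h i
  obtain ⟨i, hiS, hiT⟩ := exists_sym2_notMem_of_card_lt hinj u v (by simpa using hST)
  have hpi := parity_ne_of_adj (adj_add_single u i)
  exact (isPrism_layer d hb).hasHamPathThrough_cross (hlace S hS hS1 _ _ hpi hiS)
    (hlace T hT hT1 _ _ (hp ▸ hpi.symm) hiT)

theorem hasHamPathThrough_of_layer (hm : 2 ≤ m) (hlace : PrescribedEdgeLaceable m)
    (d : Fin (m + 1)) (hb : b ≠ b') (hS : ↑S ⊆ (cube m).edgeSet)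
    (hT : ↑T ⊆ (cube m).edgeSet) (hS1 : #S ≤ 1) (hT1 : #T ≤ 1) (hST : #S + #T < m)
    {u : Fin m → ZMod 2} {v : Fin (m + 1) → ZMod 2} (hp : parity (layer d b u) ≠ parity v)
    (huv : s(layer d b u, v) ∉ S.image (Sym2.map (layer d b))) :
    (cube (m + 1)).HasHamPathThrough
      (S.image (Sym2.map (layer d b)) ∪ T.image (Sym2.map (layer d b'))) (layer d b u) v := by
  obtain ⟨c, v, rfl⟩ := exists_layer_eq d v
  rw [parity_layer, parity_layer] at hp
  rcases eq_or_ne c b with rfl | hc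
  · refine hasHamPathThrough_same_layer hm hlace d hb hS hT hS1 hT1 (by simpa using hp)
      fun h => huv ?_
    simpa using mem_image_of_mem (Sym2.map (layer d c)) h
  · obtain rfl := zmod_two_eq_of_ne_of_ne hc hb.symm
    have hcancel : ∀ b c p q : ZMod 2, b + p ≠ c + q → c ≠ b → p = q := by decide
    exact hasHamPathThrough_cross_layer hlace d hb hS hT hS1 hT1 hST (hcancel _ _ _ _ hp hc)

end Step

theorem prescribedEdgeLaceable_two : PrescribedEdgeLaceable 2 := by
  -- `Q_2` is a 4-cycle: go round it the long way, from `u` to `v = u + e_i` via `u + e_j`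
  have square : ∀ (u : Fin 2 → ZMod 2) (i j : Fin 2), j ≠ i →
      u + Pi.single j 1 + Pi.single i 1 + Pi.single j 1 = u + Pi.single i 1 ∧
      (∀ z, [u, u + Pi.single j 1, u + Pi.single j 1 + Pi.single i 1,
        u + Pi.single i 1].count z = 1) ∧
      ∀ a k, s(a, a + Pi.single k 1) ≠ s(u, u + Pi.single i 1) →
        s(a, a + Pi.single k 1) ∈ [s(u, u + Pi.single j 1),
          s(u + Pi.single j 1, u + Pi.single j 1 + Pi.single i 1),
          s(u + Pi.single j 1 + Pi.single i 1, u + Pi.single i 1)] := by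
    decide
  have adjacent : ∀ u v : Fin 2 → ZMod 2, parity u ≠ parity v →
      ∃ i j : Fin 2, j ≠ i ∧ v = u + Pi.single i 1 := by
    decide
  intro S hS _ u v hp huv
  obtain ⟨i, j, hij, rfl⟩ := adjacent u v hp
  obtain ⟨hsq, hcount, hedges⟩ := square u i j hij
  refine ⟨.cons (adj_add_single u j) (.cons (adj_add_single _ i)
    (.cons (hsq ▸ adj_add_single _ j) .nil)), fun z => by simpa using hcount z, fun e he => ?_⟩
  obtain ⟨a, k, rfl⟩ := exists_eq_of_mem_edgeSet (hS he)
  simpa using hedges a k fun h => huv (h ▸ he)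

theorem prescribedEdgeLaceable {m : ℕ} (hm : 2 ≤ m) : PrescribedEdgeLaceable m := by
  induction m, hm using Nat.le_induction with
  | base => exact prescribedEdgeLaceable_two
  | succ m hm hlace =>
    intro S hS hS1 u v hp huv
    obtain ⟨e, hSe⟩ := card_le_one_iff_subset_singleton.1 hS1
    rcases subset_singleton_iff.1 hSe with rfl | rfl
    · obtain ⟨b, u, rfl⟩ := exists_layer_eq 0 u
      refine (hasHamPathThrough_of_layer hm hlace 0 (b' := b + 1) (by simp) (S := ∅) (T := ∅)
        (by simp) (by simp) (by simp) (by simp) (by rw [card_empty]; omega) hp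
        (by simp)).mono (by simp)
    obtain ⟨a, j, rfl⟩ := exists_eq_of_mem_edgeSet (hS (mem_singleton_self _))
    have : Nontrivial (Fin (m + 1)) := Fin.nontrivial_iff_two_le.2 (by omega)
    obtain ⟨d, hd⟩ := exists_ne j
    obtain ⟨e, he, hee⟩ := exists_eq_map_layer (hS (mem_singleton_self _))
      fun z hz => apply_eq_of_mem_edge hz hd
    obtain ⟨b, u, rfl⟩ := exists_layer_eq d u
    rcases eq_or_ne b (a d) with rfl | hb
    · refine (hasHamPathThrough_of_layer hm hlace d (b' := a d + 1) (by simp) (S := {e})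
        (T := ∅) (by simpa using he) (by simp) (by simp) (by simp)
        (by rw [card_singleton, card_empty]; omega) hp (by simpa [← hee] using huv)).mono
        (by simp [hee])
    · refine (hasHamPathThrough_of_layer hm hlace d hb (S := ∅) (T := {e})
        (by simp) (by simpa using he) (by simp) (by simp)
        (by rw [card_singleton, card_empty]; omega) hp (by simp)).mono (by simp [hee])

theorem hasHamPathThrough_pair {m : ℕ} (hm : 3 ≤ m) {d : Fin (m + 1)} {b b' : ZMod 2}
    (hb : b ≠ b') {f f' : Sym2 (Fin m → ZMod 2)} (hf : f ∈ (cube m).edgeSet)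
    (hf' : f' ∈ (cube m).edgeSet) {u : Fin m → ZMod 2} {v : Fin (m + 1) → ZMod 2}
    (hp : parity (layer d b u) ≠ parity v) (huv : s(layer d b u, v) ≠ Sym2.map (layer d b) f) :
    (cube (m + 1)).HasHamPathThrough {Sym2.map (layer d b) f, Sym2.map (layer d b') f'}
      (layer d b u) v :=
  (hasHamPathThrough_of_layer (by omega) (prescribedEdgeLaceable (by omega)) d hb
    (S := {f}) (T := {f'}) (by simpa) (by simpa) (by simp) (by simp)
    (by rw [card_singleton, card_singleton]; omega) hp (by simpa using huv)).mono (by simp)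

end cube

open cube in
theorem stmt2 (n : ℕ) (hn : 4 ≤ n)
    (e₁ e₂ : Sym2 (Fin n → ZMod 2))
    (he₁ : e₁ ∈ (cube n).edgeSet) (he₂ : e₂ ∈ (cube n).edgeSet)
    (hdisj : ∀ z, z ∈ e₁ → z ∉ e₂)
    (u v : Fin n → ZMod 2) (hp : parity u ≠ parity v)
    (huv₁ : s(u, v) ≠ e₁) (huv₂ : s(u, v) ≠ e₂) :
    ∃ w : (cube n).Walk u v, w.IsHamiltonian ∧ e₁ ∈ w.edges ∧ e₂ ∈ w.edges := by
  obtain ⟨m, rfl⟩ : ∃ m, n = m + 1 := ⟨n - 1, by omega⟩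
  obtain ⟨d, b₁, b₂, f₁, f₂, hb, hf₁, hf₂, rfl, rfl⟩ :=
    exists_opposite_layers_of_disjoint he₁ he₂ hdisj
  obtain ⟨b, u, rfl⟩ := exists_layer_eq d u
  obtain ⟨w, hw, hwe⟩ : (cube (m + 1)).HasHamPathThrough
      {Sym2.map (layer d b₁) f₁, Sym2.map (layer d b₂) f₂} (layer d b u) v := by
    rcases eq_or_ne b b₁ with rfl | hb₁
    · exact hasHamPathThrough_pair (by omega) hb hf₁ hf₂ hp huv₁
    · obtain rfl := zmod_two_eq_of_ne_of_ne hb₁ hb.symm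
      exact (hasHamPathThrough_pair (by omega) hb.symm hf₂ hf₁ hp huv₂).mono (pair_comm _ _).le
  exact ⟨w, hw, hwe _ (by simp), hwe _ (by simp)⟩
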